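/- Let p ∈ [1,∞), let I be a nonempty set, and let f, g ∈ ℓ^p(I)^+. If f ≺_s g and g ≺_w f, then f ≺ g. -/

import Mathlib

open scoped ENNReal BigOperators

noncomputable section

/-- ℓᵖ(I) with real scalars. -/
abbrev Lp (I : Type*) (p : ℝ≥0∞) := lp (fun _ : I => ℝ) p

/-- The standard basis vector `e_j` of `ℓᵖ(I)`. -/
def stdVec {I : Type*} (p : ℝ≥0∞) (j : I) : Lp I p :=
  haveI := Classical.decEq I
  lp.single p j 1

/-- A bounded operator on ℓᵖ(I) is positive if it maps the positive cone into itself. -/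
def IsPos {I : Type*} {p : ℝ≥0∞} [Fact (1 ≤ p)] (A : Lp I p →L[ℝ] Lp I p) : Prop :=
  ∀ f : Lp I p, (∀ i, 0 ≤ f i) → ∀ i, 0 ≤ A f i

/-- Doubly stochastic operator on ℓᵖ(I). -/
def DoublyStochastic {I : Type*} {p : ℝ≥0∞} [Fact (1 ≤ p)]
    (A : Lp I p →L[ℝ] Lp I p) : Prop :=
  IsPos A ∧ (∀ i : I, HasSum (fun j : I => A (stdVec p j) i) 1)
          ∧ (∀ j : I, HasSum (fun i : I => A (stdVec p j) i) 1)

/-- Doubly substochastic operator on ℓᵖ(I) (finite partial sums formulation). -/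
def DoublySubstochastic {I : Type*} {p : ℝ≥0∞} [Fact (1 ≤ p)]
    (A : Lp I p →L[ℝ] Lp I p) : Prop :=
  IsPos A ∧ (∀ i : I, ∀ s : Finset I, ∑ j ∈ s, A (stdVec p j) i ≤ 1)
          ∧ (∀ j : I, ∀ s : Finset I, ∑ i ∈ s, A (stdVec p j) i ≤ 1)

/-- Increasable doubly substochastic operator on ℓᵖ(I). -/
def IncreasableDsS {I : Type*} {p : ℝ≥0∞} [Fact (1 ≤ p)]
    (A : Lp I p →L[ℝ] Lp I p) : Prop :=
  IsPos A ∧ ∃ A₁ : Lp I p →L[ℝ] Lp I p, DoublyStochastic A₁ ∧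
    ∀ i j : I, A (stdVec p j) i ≤ A₁ (stdVec p j) i

/-- Majorization: `f ≺ g`. -/
def Maj {I : Type*} {p : ℝ≥0∞} [Fact (1 ≤ p)] (f g : Lp I p) : Prop :=
  ∃ D : Lp I p →L[ℝ] Lp I p, DoublyStochastic D ∧ f = D g

/-- Weak majorization: `f ≺_w g`. -/
def MajW {I : Type*} {p : ℝ≥0∞} [Fact (1 ≤ p)] (f g : Lp I p) : Prop :=
  ∃ D : Lp I p →L[ℝ] Lp I p, DoublySubstochastic D ∧ f = D g

/-- Submajorization: `f ≺_s g`. -/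
def MajS {I : Type*} {p : ℝ≥0∞} [Fact (1 ≤ p)] (f g : Lp I p) : Prop :=
  ∃ D : Lp I p →L[ℝ] Lp I p, IncreasableDsS D ∧ f = D g

/-- Permutation operator on ℓᵖ(I). -/
def IsPermutationOp {I : Type*} {p : ℝ≥0∞} [Fact (1 ≤ p)]
    (P : Lp I p →L[ℝ] Lp I p) : Prop :=
  ∃ θ : I ≃ I, ∀ j : I, P (stdVec p j) = stdVec p (θ j)

/-- `P` is the operator `P_θ` associated with the injection `θ : I → I`,
i.e. `P f = ∑_{k ∈ I} f(k) e_{θ(k)}`. -/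
def IsPTheta {I : Type*} {p : ℝ≥0∞} [Fact (1 ≤ p)] (θ : I → I)
    (P : Lp I p →L[ℝ] Lp I p) : Prop :=
  (∀ f : Lp I p, ∀ k : I, P f (θ k) = f k) ∧
  (∀ f : Lp I p, ∀ i : I, i ∉ Set.range θ → P f i = 0)

/-- `T` preserves weak majorization on the positive cone. -/
def PreservesMajW {I : Type*} {p : ℝ≥0∞} [Fact (1 ≤ p)]
    (T : Lp I p →L[ℝ] Lp I p) : Prop :=
  ∀ f g : Lp I p, (∀ i, 0 ≤ f i) → (∀ i, 0 ≤ g i) → MajW f g → MajW (T f) (T g)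

/-- `T` preserves submajorization on the positive cone. -/
def PreservesMajS {I : Type*} {p : ℝ≥0∞} [Fact (1 ≤ p)]
    (T : Lp I p →L[ℝ] Lp I p) : Prop :=
  ∀ f g : Lp I p, (∀ i, 0 ≤ f i) → (∀ i, 0 ≤ g i) → MajS f g → MajS (T f) (T g)

end

/-!
If `f = D g` with `D` entrywise below a doubly stochastic `D₁`, then `f ≤ D₁ g` pointwise. By
the Schur test, doubly substochastic operators do not increase `∑ᵢ h(i)^p` on the positive cone,
so with `g = E f` we get `∑ g^p = ∑ (E f)^p ≤ ∑ f^p ≤ ∑ (D₁ g)^p ≤ ∑ g^p`. These sums are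
finite, hence all equal, and `f ≤ D₁ g` together with `∑ f^p = ∑ (D₁ g)^p` forces `f = D₁ g`.
-/

theorem ENNReal.rpow_tsum_mul_le_tsum_mul_rpow {ι : Type*} {w : ι → ℝ≥0∞} (hw : ∑' j, w j ≤ 1)
    (z : ι → ℝ≥0∞) {r : ℝ} (hr : 1 ≤ r) :
    (∑' j, w j * z j) ^ r ≤ ∑' j, w j * z j ^ r := by
  have hr₀ : 0 < r := zero_lt_one.trans_le hr
  rw [← ENNReal.le_rpow_inv_iff hr₀, ENNReal.tsum_eq_iSup_sum]
  refine iSup_le fun s => ?_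
  calc ∑ j ∈ s, w j * z j
      ≤ (∑ j ∈ s, w j) ^ (1 - r⁻¹) * (∑ j ∈ s, w j * z j ^ r) ^ r⁻¹ :=
        ENNReal.inner_le_weight_mul_Lp_of_nonneg s hr w z
    _ ≤ 1 * (∑' j, w j * z j ^ r) ^ r⁻¹ := by
        gcongr
        · exact ENNReal.rpow_le_one ((ENNReal.sum_le_tsum s).trans hw)
            (sub_nonneg.2 (inv_le_one_of_one_le₀ hr))
        · exact ENNReal.sum_le_tsum s
    _ = (∑' j, w j * z j ^ r) ^ r⁻¹ := one_mul _

theorem ENNReal.tsum_ofReal_le_one {ι : Type*} {a : ι → ℝ} (ha : ∀ i, 0 ≤ a i)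
    (h : ∀ s : Finset ι, ∑ i ∈ s, a i ≤ 1) : ∑' i, ENNReal.ofReal (a i) ≤ 1 := by
  rw [ENNReal.tsum_eq_iSup_sum]
  refine iSup_le fun s => ?_
  rw [← ENNReal.ofReal_sum_of_nonneg fun i _ => ha i]
  exact ENNReal.ofReal_le_one.2 (h s)

section

variable {I : Type*} {p : ℝ≥0∞}

lemma stdVec_nonneg (j i : I) : 0 ≤ (stdVec p j : Lp I p) i := by
  classical
  simp only [stdVec, lp.coeFn_single, Pi.single_apply]
  split_ifs <;> simp

/-- `ENNReal.ofReal` truncates negative entries to `0`; on the positive cone this is `‖h‖ₚ^p`. -/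
noncomputable def powSum (p : ℝ≥0∞) (h : Lp I p) : ℝ≥0∞ :=
  ∑' i, ENNReal.ofReal (h i) ^ p.toReal

lemma powSum_mono {f h : Lp I p} (hfh : ∀ i, f i ≤ h i) : powSum p f ≤ powSum p h :=
  ENNReal.tsum_le_tsum fun i =>
    ENNReal.rpow_le_rpow (ENNReal.ofReal_le_ofReal (hfh i)) ENNReal.toReal_nonneg

variable [Fact (1 ≤ p)]

lemma one_le_toReal_of_ne_top (hp : p ≠ ∞) : 1 ≤ p.toReal := by
  simpa using ENNReal.toReal_mono hp (Fact.out : 1 ≤ p)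

lemma IsPos.apply_stdVec_nonneg {A : Lp I p →L[ℝ] Lp I p} (hA : IsPos A) (i j : I) :
    0 ≤ A (stdVec p j) i :=
  hA _ (stdVec_nonneg j) i

lemma hasSum_mul_apply_stdVec (hp : p ≠ ∞) (A : Lp I p →L[ℝ] Lp I p) (g : Lp I p) (i : I) :
    HasSum (fun j => g j * A (stdVec p j) i) (A g i) := by
  -- the instance hidden in `stdVec`, so that `lp.single p j 1` is `stdVec p j` by `rfl`
  let := Classical.decEq I
  have hsingle (j : I) : lp.single p j (g j) = g j • stdVec p j := by
    rw [show stdVec p j = lp.single p j 1 from rfl]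
    simpa using lp.single_smul (𝕜 := ℝ) (E := fun _ : I => ℝ) p j (g j) 1
  have h := ((lp.evalCLM ℝ _ p i).comp A).hasSum (lp.hasSum_single hp g)
  simp only [ContinuousLinearMap.comp_apply, hsingle, map_smul, smul_eq_mul] at h
  exact h

lemma DoublyStochastic.doublySubstochastic {A : Lp I p →L[ℝ] Lp I p} (hA : DoublyStochastic A) :
    DoublySubstochastic A :=
  ⟨hA.1, fun i s => sum_le_hasSum s (fun j _ => hA.1.apply_stdVec_nonneg i j) (hA.2.1 i),
    fun j s => sum_le_hasSum s (fun i _ => hA.1.apply_stdVec_nonneg i j) (hA.2.2 j)⟩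

lemma apply_le_apply_of_apply_stdVec_le (hp : p ≠ ∞) {A B : Lp I p →L[ℝ] Lp I p}
    (hAB : ∀ i j, A (stdVec p j) i ≤ B (stdVec p j) i) {g : Lp I p} (hg : ∀ i, 0 ≤ g i) (i : I) :
    A g i ≤ B g i :=
  hasSum_le (fun j => mul_le_mul_of_nonneg_left (hAB i j) (hg j))
    (hasSum_mul_apply_stdVec hp A g i) (hasSum_mul_apply_stdVec hp B g i)

lemma powSum_ne_top (hp : p ≠ ∞) (h : Lp I p) : powSum p h ≠ ∞ := by
  have hp₀ : 0 < p.toReal := zero_lt_one.trans_le (one_le_toReal_of_ne_top hp)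
  have hsum : Summable fun i => ‖h i‖ ^ p.toReal := (lp.memℓp h).summable hp₀
  refine ne_top_of_le_ne_top (ENNReal.ofReal_ne_top (r := ∑' i, ‖h i‖ ^ p.toReal)) ?_
  rw [ENNReal.ofReal_tsum_of_nonneg (fun i => by positivity) hsum]
  refine ENNReal.tsum_le_tsum fun i => ?_
  rw [← ENNReal.ofReal_rpow_of_nonneg (norm_nonneg _) hp₀.le]
  gcongr
  exact Real.le_norm_self _

lemma eq_of_le_of_powSum_eq (hp : p ≠ ∞) {f h : Lp I p} (hf : ∀ i, 0 ≤ f i)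
    (hfh : ∀ i, f i ≤ h i) (hsum : powSum p f = powSum p h) : f = h := by
  have hp₀ : 0 < p.toReal := zero_lt_one.trans_le (one_le_toReal_of_ne_top hp)
  refine lp.ext <| funext fun i => (hfh i).antisymm <| not_lt.1 fun hlt => ?_
  have hlt_pow : ENNReal.ofReal (f i) ^ p.toReal < ENNReal.ofReal (h i) ^ p.toReal :=
    ENNReal.rpow_lt_rpow ((ENNReal.ofReal_lt_ofReal_iff_of_nonneg (hf i)).2 hlt) hp₀
  exact (ENNReal.tsum_lt_tsum (powSum_ne_top hp f)
    (fun j => ENNReal.rpow_le_rpow (ENNReal.ofReal_le_ofReal (hfh j)) hp₀.le) hlt_pow).ne hsum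

/-- Schur test: Jensen's inequality along each row, then the column sums. -/
lemma DoublySubstochastic.powSum_apply_le (hp : p ≠ ∞) {A : Lp I p →L[ℝ] Lp I p}
    (hA : DoublySubstochastic A) (h : Lp I p) (hh : ∀ i, 0 ≤ h i) :
    powSum p (A h) ≤ powSum p h := by
  obtain ⟨hpos, hrow, hcol⟩ := hA
  set r := p.toReal
  have hr : 1 ≤ r := one_le_toReal_of_ne_top hp
  have hexpand (i : I) : ENNReal.ofReal (A h i)
      = ∑' j, ENNReal.ofReal (A (stdVec p j) i) * ENNReal.ofReal (h j) := by
    have hs := hasSum_mul_apply_stdVec hp A h i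
    rw [← hs.tsum_eq, ENNReal.ofReal_tsum_of_nonneg
      (fun j => mul_nonneg (hh j) (hpos.apply_stdVec_nonneg i j)) hs.summable]
    exact tsum_congr fun j => by rw [ENNReal.ofReal_mul (hh j), mul_comm]
  calc powSum p (A h)
      ≤ ∑' i, ∑' j, ENNReal.ofReal (A (stdVec p j) i) * ENNReal.ofReal (h j) ^ r :=
        ENNReal.tsum_le_tsum fun i => hexpand i ▸ ENNReal.rpow_tsum_mul_le_tsum_mul_rpow
          (ENNReal.tsum_ofReal_le_one (hpos.apply_stdVec_nonneg i) (hrow i)) _ hr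
    _ = ∑' j, (∑' i, ENNReal.ofReal (A (stdVec p j) i)) * ENNReal.ofReal (h j) ^ r := by
        rw [ENNReal.tsum_comm]
        exact tsum_congr fun j => ENNReal.tsum_mul_right
    _ ≤ ∑' j, 1 * ENNReal.ofReal (h j) ^ r := by
        gcongr with j
        exact ENNReal.tsum_ofReal_le_one (fun i => hpos.apply_stdVec_nonneg i j) (hcol j)
    _ = powSum p h := by simp only [one_mul, powSum, r]

end

theorem stmt_3_general {I : Type*} (p : ℝ≥0∞) [Fact (1 ≤ p)] (hp : p ≠ ∞)
    (f g : Lp I p) (hf : ∀ i, 0 ≤ f i) (hg : ∀ i, 0 ≤ g i)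
    (h1 : MajS f g) (h2 : MajW g f) : Maj f g := by
  obtain ⟨D, ⟨-, D₁, hD₁, hDD₁⟩, rfl⟩ := h1
  obtain ⟨E, hE, hgE⟩ := h2
  have hle : ∀ i, D g i ≤ D₁ g i := apply_le_apply_of_apply_stdVec_le hp hDD₁ hg
  have hpow : powSum p (D₁ g) ≤ powSum p (D g) := calc
    powSum p (D₁ g) ≤ powSum p g := hD₁.doublySubstochastic.powSum_apply_le hp g hg
    _ = powSum p (E (D g)) := by rw [← hgE]
    _ ≤ powSum p (D g) := hE.powSum_apply_le hp _ hf
  exact ⟨D₁, hD₁, eq_of_le_of_powSum_eq hp hf hle (le_antisymm (powSum_mono hle) hpow)⟩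

theorem stmt_3 {I : Type*} [Nonempty I] (p : ℝ≥0∞) [Fact (1 ≤ p)] (hp : p ≠ ∞)
    (f g : Lp I p) (hf : ∀ i, 0 ≤ f i) (hg : ∀ i, 0 ≤ g i)
    (h1 : MajS f g) (h2 : MajW g f) : Maj f g :=
  stmt_3_general p hp f g hf hg h1 h2
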